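/- Let m ≥ 1 and let y_λ ∈ [δ/4, π/4] with δ ∈ (0, δ₀), cos(δ₀) ≥ 1/2, and δ₀ ≤ π/12. Then sin(y_λ + δ/8)^m - sin(y_λ)^m ≥ (m/8^{m+1}) δ^m. -/

import Mathlib

open Real

/- By the mean value theorem the difference is `δ/8` times the derivative
`m sin(ξ)^(m-1) cos(ξ)` at some `ξ ∈ [y_λ, y_λ + δ/8] ⊆ [δ/4, 3π/8]`. Jordan's inequality
`sin ξ ≥ 2ξ/π` gives `sin ξ ≥ ξ/2 ≥ δ/8` there, and its companion `cos ξ ≥ 1 - 2ξ/π`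
gives `cos ξ ≥ 1/4`. -/

lemma half_le_sin {x : ℝ} (hx₀ : 0 ≤ x) (hx : x ≤ π / 2) : x / 2 ≤ sin x :=
  calc x / 2 = 2 / 4 * x := by ring
    _ ≤ 2 / π * x := by gcongr; exact pi_le_four
    _ ≤ sin x := mul_le_sin hx₀ hx

lemma quarter_le_cos {x : ℝ} (hx₀ : 0 ≤ x) (hx : x ≤ 3 * π / 8) : 1 / 4 ≤ cos x :=
  calc (1 : ℝ) / 4 = 1 - 2 / π * (3 * π / 8) := by field_simp; ring
    _ ≤ 1 - 2 / π * x := by gcongr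
    _ ≤ cos x := one_sub_mul_le_cos hx₀ (by linarith [pi_pos])

lemma mul_sub_le_sin_pow_sub_sin_pow {a b : ℝ} (ha : 0 ≤ a) (hab : a ≤ b) (hb : b ≤ π / 2)
    (n : ℕ) : (n + 1) * sin a ^ n * cos b * (b - a) ≤ sin b ^ (n + 1) - sin a ^ (n + 1) := by
  have hderiv (x : ℝ) : HasDerivAt (fun x => sin x ^ (n + 1)) ((n + 1) * sin x ^ n * cos x) x := by
    simpa using (hasDerivAt_sin x).fun_pow (n + 1)
  have hdiff : Differentiable ℝ fun x => sin x ^ (n + 1) := fun x => (hderiv x).differentiableAt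
  refine (convex_Icc a b).mul_sub_le_image_sub_of_le_deriv hdiff.continuous.continuousOn
    hdiff.differentiableOn (fun x hx => ?_) a (Set.left_mem_Icc.2 hab) b
    (Set.right_mem_Icc.2 hab) hab
  rw [interior_Icc] at hx
  obtain ⟨hax, hxb⟩ := hx
  rw [(hderiv x).deriv]
  have hsin : sin a ≤ sin x := sin_le_sin_of_le_of_le_pi_div_two (by linarith [pi_pos])
    (by linarith) hax.le
  have hcos : cos b ≤ cos x := cos_le_cos_of_nonneg_of_le_pi (by linarith) (by linarith [pi_pos])
    hxb.le
  have hsin_a : 0 ≤ sin a := sin_nonneg_of_nonneg_of_le_pi ha (by linarith [pi_pos])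
  have hcos_b : 0 ≤ cos b := cos_nonneg_of_neg_pi_div_two_le_of_le (by linarith [pi_pos]) hb
  gcongr
  exact mul_nonneg (by positivity) (pow_nonneg (hsin_a.trans hsin) n)

theorem stmt_16_general (m : ℕ)
    (δ : ℝ) (hδ : 0 < δ)
    (yl : ℝ) (hyl : yl ∈ Set.Icc (δ / 4) (π / 4)) :
    Real.sin (yl + δ / 8) ^ m - Real.sin yl ^ m ≥ ((m : ℝ) / 8 ^ (m + 1)) * δ ^ m := by
  obtain ⟨hyl₁, hyl₂⟩ := hyl
  obtain _ | n := m
  · simp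
  have hpi := pi_pos
  have hsin : δ / 8 ≤ sin yl := by
    linarith [half_le_sin (x := yl) (by linarith) (by linarith)]
  have hcos : 1 / 4 ≤ cos (yl + δ / 8) := quarter_le_cos (by linarith) (by linarith)
  have hmvt := mul_sub_le_sin_pow_sub_sin_pow (a := yl) (b := yl + δ / 8) (by linarith)
    (by linarith) (by linarith) n
  have hcoeff : (n + 1) * (δ / 8) ^ n * (1 / 4) * (yl + δ / 8 - yl)
      = 2 * ((n + 1 : ℝ) / 8 ^ (n + 1 + 1) * δ ^ (n + 1)) := by
    rw [div_pow]; field_simp; ring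
  push_cast
  calc (n + 1 : ℝ) / 8 ^ (n + 1 + 1) * δ ^ (n + 1)
      ≤ (n + 1) * (δ / 8) ^ n * (1 / 4) * (yl + δ / 8 - yl) := by
        rw [hcoeff]
        linarith [show 0 ≤ (n + 1 : ℝ) / 8 ^ (n + 1 + 1) * δ ^ (n + 1) by positivity]
    _ ≤ (n + 1) * sin yl ^ n * cos (yl + δ / 8) * (yl + δ / 8 - yl) := by
        have : 0 ≤ sin yl := by linarith
        gcongr
        linarith
    _ ≤ _ := hmvt

/-- Mean-value-theorem estimate in the case `y_λ ≤ π/4`: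
`sin(y_λ + δ/8)^m - sin(y_λ)^m ≥ (m/8^{m+1}) δ^m`. -/
theorem stmt_16 (m : ℕ) (hm : 1 ≤ m) (δ₀ : ℝ) (hδ₀ : 0 < δ₀)
    (hcos : Real.cos δ₀ ≥ 1/2) (hδ₀small : δ₀ ≤ π / 12)
    (δ : ℝ) (hδ : 0 < δ) (hδlt : δ < δ₀)
    (yl : ℝ) (hyl : yl ∈ Set.Icc (δ / 4) (π / 4)) :
    Real.sin (yl + δ / 8) ^ m - Real.sin yl ^ m ≥ ((m : ℝ) / 8 ^ (m + 1)) * δ ^ m :=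
  stmt_16_general m δ hδ yl hyl
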